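/- Let ψ_n ∈ 𝓥, n ∈ ℕ, let ψ ∈ L^∞(E, ν), and assume that ψ_n ρ s-converges to ψρ for every ρ ∈ 𝓒. If φ_n ∈ 𝓒 w-converges to φ ∈ L²(E, ν), then φ_n ψ_n w-converges to φψ. -/

import Mathlib

/-!
A `w`-convergent sequence in `𝓒` is eventually bounded in norm: otherwise one extracts a
subsequence `n k` with `‖φ_{n k}‖² > (k+1)³`, and glues suitably rescaled `𝓕`-representatives
of the `φ_{n k}` along the disjoint carriers `E_{n k}` into a single test function `χ ∈ 𝓒` with
`‖χ‖_{n k} → 0 = ‖χ‖` but `⟨φ_{n k}, χ⟩_{n k} = k + 1`.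
Given the bound, `⟨φ_n ψ_n, ρ⟩_n = ⟨φ_n, ψ_n ρ⟩_n`, and `⟨φ_n, ψ_n ρ⟩_n → ⟨φ, ψ ρ⟩` is
"weak times strong": replace `ψ ρ` by a nearby `χ ∈ 𝓕 ⊆ 𝓒`, for which the convergence is the
`w`-convergence of `φ_n`, and control the error by Cauchy–Schwarz, since
`‖ψ_n ρ - χ‖_n → ‖ψ ρ - χ‖` by the `s`-convergence of `ψ_n ρ`.
-/

open MeasureTheory Filter Topology

noncomputable section

namespace Mosco

variable {E : Type*} [MeasurableSpace E]

/-- The inner product of two real-valued functions with respect to a measure,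
`⟨φ, ψ⟩ = ∫ φ ψ dμ`. -/
def ip (μ : Measure E) (φ ψ : E → ℝ) : ℝ := ∫ x, φ x * ψ x ∂μ

/-- The framework of Section 2.1: mutually singular probability measures `ν n`, `n : ℕ`
(`ν 0` playing the role of the limit measure `ν`), such that `L²(E, ν 0)` is separable,
together with disjoint sets `En n` carrying `ν n`, and a linear subset `F = 𝓕 ⊆ 𝓓`
which is dense in `L²(E, ν 0)`. -/
structure Frame (E : Type*) [MeasurableSpace E] where
  ν : ℕ → Measure E
  prob : ∀ n, IsProbabilityMeasure (ν n)
  singular : ∀ m n, m ≠ n → (ν m).MutuallySingular (ν n)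
  separableL2 : TopologicalSpace.SeparableSpace (Lp ℝ 2 (ν 0))
  En : ℕ → Set E
  measEn : ∀ n, MeasurableSet (En n)
  disjEn : ∀ m n, m ≠ n → Disjoint (En m) (En n)
  nullEn : ∀ n, ν n (En n)ᶜ = 0
  F : Set (E → ℝ)
  F_measurable : ∀ φ ∈ F, Measurable φ
  F_memL2 : ∀ φ ∈ F, ∀ n, MemLp φ 2 (ν n)
  F_tendsto : ∀ φ ∈ F, Tendsto (fun n => ip (ν n) φ φ) atTop (𝓝 (ip (ν 0) φ φ))
  F_linear : ∀ φ ∈ F, ∀ ψ ∈ F, ∀ a b : ℝ, (fun x => a * φ x + b * ψ x) ∈ F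
  F_dense : ∀ f : E → ℝ, Measurable f → MemLp f 2 (ν 0) → ∀ ε : ℝ, 0 < ε →
    ∃ φ ∈ F, ip (ν 0) (fun x => f x - φ x) (fun x => f x - φ x) < ε

/-- The set `𝓓`: everywhere defined measurable functions lying in every `L²(E, ν n)`
whose `ν n`-norms converge to the `ν 0`-norm. -/
def Frame.D (fr : Frame E) : Set (E → ℝ) :=
  {φ | Measurable φ ∧ (∀ n, MemLp φ 2 (fr.ν n)) ∧
    Tendsto (fun n => ip (fr.ν n) φ φ) atTop (𝓝 (ip (fr.ν 0) φ φ))}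

/-- The set `𝓒`: elements of `𝓓` satisfying conditions (c1) and (c2). -/
def Frame.C (fr : Frame E) : Set (E → ℝ) :=
  {φ | φ ∈ fr.D ∧ (∀ n, 1 ≤ n → ∃ g ∈ fr.F, φ =ᵐ[fr.ν n] g) ∧
    ∀ ψ ∈ fr.F, Tendsto (fun n => ip (fr.ν n) φ ψ) atTop (𝓝 (ip (fr.ν 0) φ ψ))}

/-- The set `𝓥` of multipliers mapping `𝓓` into `𝓓` and `𝓕` into `𝓕`. -/
def Frame.V (fr : Frame E) : Set (E → ℝ) :=
  {ψ | Measurable ψ ∧ (∀ n, MemLp ψ 2 (fr.ν n)) ∧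
    (∀ σ ∈ fr.D, (fun x => σ x * ψ x) ∈ fr.D) ∧
    (∀ τ ∈ fr.F, (fun x => τ x * ψ x) ∈ fr.F)}

/-- `w`-convergence of a sequence `φs` (with `φs n` regarded as an element of
`L²(E, ν n)`) to `φ ∈ L²(E, ν 0)`. -/
def Frame.WConv (fr : Frame E) (φs : ℕ → E → ℝ) (φ : E → ℝ) : Prop :=
  ∀ ψ ∈ fr.C, Tendsto (fun n => ip (fr.ν n) (φs n) ψ) atTop (𝓝 (ip (fr.ν 0) φ ψ))

/-- `s`-convergence: `w`-convergence together with convergence of the norms. -/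
def Frame.SConv (fr : Frame E) (φs : ℕ → E → ℝ) (φ : E → ℝ) : Prop :=
  fr.WConv φs φ ∧
  Tendsto (fun n => ip (fr.ν n) (φs n) (φs n)) atTop (𝓝 (ip (fr.ν 0) φ φ))

end Mosco

open Function

lemma tendsto_of_forall_approx {ι α : Type*} [PseudoMetricSpace α] {l : Filter ι}
    {a : ι → α} {a₀ : α}
    (h : ∀ ε > 0, ∃ b : ι → α, ∃ b₀, Tendsto b l (𝓝 b₀) ∧
      (∀ᶠ i in l, dist (a i) (b i) ≤ ε) ∧ dist a₀ b₀ ≤ ε) :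
    Tendsto a l (𝓝 a₀) := by
  refine Metric.tendsto_nhds.2 fun ε hε => ?_
  obtain ⟨b, b₀, hb, hab, hab₀⟩ := h (ε / 3) (by positivity)
  filter_upwards [hab, Metric.tendsto_nhds.1 hb (ε / 3) (by positivity)] with i h₁ h₂
  calc dist (a i) a₀ ≤ dist (a i) (b i) + dist (b i) b₀ + dist b₀ a₀ := dist_triangle4 _ _ _ _
    _ < ε := by rw [dist_comm b₀]; linarith

lemma tendsto_of_comp_of_eq_off_range {X : Type*} [TopologicalSpace X]
    {n : ℕ → ℕ} {f : ℕ → X} {a : X}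
    (hf : Tendsto (f ∘ n) atTop (𝓝 a)) (hoff : ∀ m ∉ Set.range n, f m = a) :
    Tendsto f atTop (𝓝 a) := by
  rw [← Nat.cofinite_eq_atTop] at hf ⊢
  intro U hU
  refine mem_cofinite.2 (((mem_cofinite.1 (hf hU)).image n).subset fun m hm => ?_)
  obtain ⟨k, rfl⟩ : m ∈ Set.range n := by
    by_contra hm'
    exact hm (by simpa [hoff m hm'] using mem_of_mem_nhds hU)
  exact ⟨k, hm, rfl⟩

namespace Mosco

variable {E : Type*} [MeasurableSpace E]

section InnerProduct

variable {μ : Measure E} {f f' g g' h : E → ℝ}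

lemma ip_self_nonneg (μ : Measure E) (f : E → ℝ) : 0 ≤ ip μ f f :=
  integral_nonneg fun _ => mul_self_nonneg _

lemma ip_congr_ae (hf : f =ᵐ[μ] f') (hg : g =ᵐ[μ] g') : ip μ f g = ip μ f' g' :=
  integral_congr_ae (hf.mul hg)

lemma ip_mul_left (μ : Measure E) (f g h : E → ℝ) :
    ip μ (fun x => f x * g x) h = ip μ f (fun x => g x * h x) := by
  simp only [ip, mul_assoc]

lemma ip_const_mul_left (μ : Measure E) (c : ℝ) (f g : E → ℝ) :
    ip μ (fun x => c * f x) g = c * ip μ f g := by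
  simp only [ip, mul_assoc, integral_const_mul]

lemma ip_const_mul_right (μ : Measure E) (c : ℝ) (f g : E → ℝ) :
    ip μ f (fun x => c * g x) = c * ip μ f g := by
  simp only [ip, mul_left_comm _ c, integral_const_mul]

lemma ip_eq_inner (hf : MemLp f 2 μ) (hg : MemLp g 2 μ) :
    ip μ f g = inner ℝ (hf.toLp f) (hg.toLp g) := by
  rw [L2.inner_def]
  refine integral_congr_ae ?_
  filter_upwards [hf.coeFn_toLp, hg.coeFn_toLp] with x hfx hgx
  simp [hfx, hgx, mul_comm]

lemma abs_ip_le (hf : MemLp f 2 μ) (hg : MemLp g 2 μ) :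
    |ip μ f g| ≤ √(ip μ f f) * √(ip μ g g) := by
  rw [ip_eq_inner hf hg, ip_eq_inner hf hf, ip_eq_inner hg hg,
    real_inner_self_eq_norm_mul_norm, real_inner_self_eq_norm_mul_norm,
    Real.sqrt_mul_self (norm_nonneg _), Real.sqrt_mul_self (norm_nonneg _)]
  exact abs_real_inner_le_norm _ _

lemma ip_sub_right (hf : MemLp f 2 μ) (hg : MemLp g 2 μ) (hh : MemLp h 2 μ) :
    ip μ f (fun x => g x - h x) = ip μ f g - ip μ f h := by
  rw [show (fun x => g x - h x) = g - h from rfl, ip_eq_inner hf (hg.sub hh), MemLp.toLp_sub hg hh,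
    inner_sub_right, ← ip_eq_inner hf hg, ← ip_eq_inner hf hh]

lemma ip_sub_sub (hf : MemLp f 2 μ) (hg : MemLp g 2 μ) :
    ip μ (fun x => f x - g x) (fun x => f x - g x) = ip μ f f - 2 * ip μ f g + ip μ g g := by
  rw [show (fun x => f x - g x) = f - g from rfl, ip_eq_inner (hf.sub hg) (hf.sub hg),
    MemLp.toLp_sub hf hg, real_inner_sub_sub_self, ← ip_eq_inner hf hf, ← ip_eq_inner hf hg,
    ← ip_eq_inner hg hg]

lemma tendsto_ip_zero_of_tendsto_ip_self_zero {μ : ℕ → Measure E} {f g : ℕ → E → ℝ}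
    (hf : ∀ m, MemLp (f m) 2 (μ m)) (hg : ∀ m, MemLp (g m) 2 (μ m))
    (hf₀ : Tendsto (fun m => ip (μ m) (f m) (f m)) atTop (𝓝 0))
    (hgb : IsBoundedUnder (· ≤ ·) atTop fun m => ip (μ m) (g m) (g m)) :
    Tendsto (fun m => ip (μ m) (f m) (g m)) atTop (𝓝 0) := by
  obtain ⟨B, hB⟩ := hgb
  refine squeeze_zero_norm' ?_ (by simpa using hf₀.sqrt.mul_const √B)
  filter_upwards [eventually_map.1 hB] with m hm
  exact (abs_ip_le (hf m) (hg m)).trans (by gcongr)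

end InnerProduct

namespace Frame

variable (fr : Frame E)

lemma const_mul_mem_F {φ : E → ℝ} (hφ : φ ∈ fr.F) (c : ℝ) : (fun x => c * φ x) ∈ fr.F := by
  simpa using fr.F_linear φ hφ φ hφ c 0

lemma F_subset_C : fr.F ⊆ fr.C := by
  intro φ hφ
  refine ⟨⟨fr.F_measurable φ hφ, fr.F_memL2 φ hφ, fr.F_tendsto φ hφ⟩,
    fun _ _ => ⟨φ, hφ, EventuallyEq.rfl⟩, fun ψ hψ => ?_⟩
  have hsub : (fun x => φ x - ψ x) ∈ fr.F := by
    simpa [← sub_eq_add_neg] using fr.F_linear φ hφ ψ hψ 1 (-1)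
  have polar : ∀ m, ip (fr.ν m) φ ψ = (ip (fr.ν m) φ φ + ip (fr.ν m) ψ ψ
      - ip (fr.ν m) (fun x => φ x - ψ x) (fun x => φ x - ψ x)) / 2 := fun m => by
    rw [ip_sub_sub (fr.F_memL2 φ hφ m) (fr.F_memL2 ψ hψ m)]
    ring
  simp only [polar]
  exact (((fr.F_tendsto φ hφ).add (fr.F_tendsto ψ hψ)).sub (fr.F_tendsto _ hsub)).div_const 2

lemma ae_mem_En (m : ℕ) : ∀ᵐ x ∂fr.ν m, x ∈ fr.En m :=
  mem_ae_iff.2 (fr.nullEn m)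

def glue (n : ℕ → ℕ) (g : ℕ → E → ℝ) : E → ℝ :=
  fun x => ∑' k, (fr.En (n k)).indicator (g k) x

section Glue

variable {fr} {n : ℕ → ℕ} {g : ℕ → E → ℝ}

lemma hasSum_glue (hn : Injective n) (x : E) :
    HasSum (fun k => (fr.En (n k)).indicator (g k) x) (fr.glue n g x) := by
  refine (summable_of_hasFiniteSupport (Set.Subsingleton.finite ?_)).hasSum
  intro j hj k hk
  by_contra hjk
  exact Set.disjoint_left.1 (fr.disjEn _ _ (hn.ne hjk))
    (Set.mem_of_indicator_ne_zero hj) (Set.mem_of_indicator_ne_zero hk)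

lemma measurable_glue (hn : Injective n) (hg : ∀ k, Measurable (g k)) : Measurable (fr.glue n g) :=
  measurable_of_tendsto_metrizable
    (fun _ => Finset.measurable_sum _ fun k _ => (hg k).indicator (fr.measEn (n k)))
    (tendsto_pi_nhds.2 fun x => (hasSum_glue hn x).tendsto_sum_nat)

lemma glue_ae_eq (hn : Injective n) (k : ℕ) : fr.glue n g =ᵐ[fr.ν (n k)] g k := by
  filter_upwards [fr.ae_mem_En (n k)] with x hx
  rw [glue, tsum_eq_single k fun j hj => Set.indicator_of_notMem
    (Set.disjoint_left.1 (fr.disjEn _ _ (hn.ne hj.symm)) hx) _, Set.indicator_of_mem hx]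

lemma glue_ae_eq_zero {m : ℕ} (hm : m ∉ Set.range n) : fr.glue n g =ᵐ[fr.ν m] 0 := by
  filter_upwards [fr.ae_mem_En m] with x hx
  have hx' : ∀ k, x ∉ fr.En (n k) := fun k =>
    Set.disjoint_left.1 (fr.disjEn _ _ fun h => hm ⟨k, h.symm⟩) hx
  simp [glue, Set.indicator_of_notMem (hx' _)]

lemma glue_mem_C (hn : Injective n) (hn₀ : 0 ∉ Set.range n) (hg : ∀ k, g k ∈ fr.F)
    (hg₀ : Tendsto (fun k => ip (fr.ν (n k)) (g k) (g k)) atTop (𝓝 0)) :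
    fr.glue n g ∈ fr.C := by
  have hL2 : ∀ m, MemLp (fr.glue n g) 2 (fr.ν m) := by
    intro m
    by_cases hm : m ∈ Set.range n
    · obtain ⟨k, rfl⟩ := hm
      exact (fr.F_memL2 _ (hg k) (n k)).ae_eq (glue_ae_eq hn k).symm
    · exact MemLp.zero.ae_eq (glue_ae_eq_zero hm).symm
  have hip₀ : ∀ ψ, ip (fr.ν 0) (fr.glue n g) ψ = 0 := fun ψ => by
    rw [ip_congr_ae (glue_ae_eq_zero hn₀) EventuallyEq.rfl]
    simp [ip]
  have hnorm : Tendsto (fun m => ip (fr.ν m) (fr.glue n g) (fr.glue n g)) atTop (𝓝 0) := by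
    refine tendsto_of_comp_of_eq_off_range (n := n) ?_ fun m hm => ?_
    · convert hg₀ using 2 with k
      exact ip_congr_ae (glue_ae_eq hn k) (glue_ae_eq hn k)
    · rw [ip_congr_ae (glue_ae_eq_zero hm) (glue_ae_eq_zero hm)]
      simp [ip]
  refine ⟨⟨measurable_glue hn fun k => fr.F_measurable _ (hg k), hL2, by rwa [hip₀]⟩,
    fun m _ => ?_, fun ψ hψ => ?_⟩
  · by_cases hm : m ∈ Set.range n
    · obtain ⟨k, rfl⟩ := hm
      exact ⟨g k, hg k, glue_ae_eq hn k⟩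
    · exact ⟨fun x => 0 * g 0 x, fr.const_mul_mem_F (hg 0) 0,
        (glue_ae_eq_zero hm).trans (.of_forall fun x => (zero_mul _).symm)⟩
  · rw [hip₀]
    exact tendsto_ip_zero_of_tendsto_ip_self_zero hL2 (fr.F_memL2 ψ hψ) hnorm
      (fr.F_tendsto ψ hψ).isBoundedUnder_le

end Glue

variable {fr}

lemma SConv.tendsto_ip_sub_self {vs : ℕ → E → ℝ} {v χ : E → ℝ} (hs : fr.SConv vs v)
    (hvs : ∀ n, MemLp (vs n) 2 (fr.ν n)) (hv : MemLp v 2 (fr.ν 0)) (hχ : χ ∈ fr.C) :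
    Tendsto (fun n => ip (fr.ν n) (fun x => vs n x - χ x) (fun x => vs n x - χ x)) atTop
      (𝓝 (ip (fr.ν 0) (fun x => v x - χ x) (fun x => v x - χ x))) := by
  simp only [fun n => ip_sub_sub (hvs n) (hχ.1.2.1 n), ip_sub_sub hv (hχ.1.2.1 0)]
  exact (hs.2.sub ((hs.1 χ hχ).const_mul 2)).add hχ.1.2.2

lemma WConv.isBoundedUnder_ip_self {φs : ℕ → E → ℝ} {φ : E → ℝ} (hφs : ∀ n, φs n ∈ fr.C)
    (hw : fr.WConv φs φ) : IsBoundedUnder (· ≤ ·) atTop fun n => ip (fr.ν n) (φs n) (φs n) := by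
  by_contra hunb
  have hfreq : ∀ M : ℝ, ∃ᶠ m in atTop, M < ip (fr.ν m) (φs m) (φs m) := by
    simpa only [IsBoundedUnder, IsBounded, eventually_map, not_exists, not_eventually,
      not_le] using hunb
  obtain ⟨n, hn, hnb⟩ := extraction_forall_of_frequently fun k : ℕ =>
    (hfreq (((k : ℝ) + 1) ^ 3)).and_eventually (eventually_ge_atTop 1)
  set b : ℕ → ℝ := fun k => ip (fr.ν (n k)) (φs (n k)) (φs (n k))
  have hb : ∀ k : ℕ, ((k : ℝ) + 1) ^ 3 < b k := fun k => (hnb k).1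
  have hb₀ : ∀ k : ℕ, 0 < b k := fun k => lt_trans (by positivity) (hb k)
  choose G hGF hGae using fun k => (hφs (n k)).2.1 (n k) (hnb k).2
  have hGG : ∀ k, ip (fr.ν (n k)) (G k) (G k) = b k := fun k =>
    (ip_congr_ae (hGae k) (hGae k)).symm
  set g : ℕ → E → ℝ := fun k x => (k + 1) / b k * G k x
  have hφg : ∀ k, ip (fr.ν (n k)) (φs (n k)) (g k) = k + 1 := fun k => by
    rw [ip_congr_ae (hGae k) EventuallyEq.rfl, ip_const_mul_right, hGG]
    field_simp [(hb₀ k).ne']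
  have hgg : ∀ k : ℕ, ip (fr.ν (n k)) (g k) (g k) ≤ 1 / ((k : ℝ) + 1) := fun k => by
    rw [ip_const_mul_left, ip_const_mul_right, hGG,
      show (k + 1) / b k * ((k + 1) / b k * b k) = ((k : ℝ) + 1) ^ 2 / b k by field_simp,
      div_le_div_iff₀ (hb₀ k) (by positivity)]
    linarith [hb k]
  have hg₀ : Tendsto (fun k => ip (fr.ν (n k)) (g k) (g k)) atTop (𝓝 0) :=
    squeeze_zero (fun k => ip_self_nonneg _ _) hgg tendsto_one_div_add_atTop_nhds_zero_nat
  have hχ := glue_mem_C hn.injective (by rintro ⟨k, hk⟩; have := (hnb k).2; omega)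
    (fun k => fr.const_mul_mem_F (hGF k) _) hg₀
  refine not_tendsto_nhds_of_tendsto_atTop ?_ _ ((hw _ hχ).comp hn.tendsto_atTop)
  refine (tendsto_atTop_add_const_right _ 1 tendsto_natCast_atTop_atTop).congr fun k => ?_
  exact ((ip_congr_ae EventuallyEq.rfl (glue_ae_eq hn.injective k)).trans (hφg k)).symm

theorem WConv.tendsto_ip_of_sConv {us vs : ℕ → E → ℝ} {u v : E → ℝ} (hus : ∀ n, us n ∈ fr.C)
    (hw : fr.WConv us u) (hu : MemLp u 2 (fr.ν 0)) (hvs : ∀ n, MemLp (vs n) 2 (fr.ν n))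
    (hvm : Measurable v) (hv : MemLp v 2 (fr.ν 0)) (hs : fr.SConv vs v) :
    Tendsto (fun n => ip (fr.ν n) (us n) (vs n)) atTop (𝓝 (ip (fr.ν 0) u v)) := by
  obtain ⟨M, hM⟩ := hw.isBoundedUnder_ip_self hus
  set K := √M + √(ip (fr.ν 0) u u) + 1
  have hK : 0 < K := by positivity
  refine tendsto_of_forall_approx fun ε hε => ?_
  obtain ⟨χ, hχF, hvχ⟩ := fr.F_dense v hvm hv ((ε / K) ^ 2) (by positivity)
  have hχ := fr.F_memL2 χ hχF
  have hvχ' := (Real.sqrt_lt' (by positivity)).2 hvχ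
  have hKε : ∀ c, c ≤ K → c * (ε / K) ≤ ε := fun c hc => by
    calc c * (ε / K) ≤ K * (ε / K) := by gcongr
      _ = ε := by field_simp
  refine ⟨fun n => ip (fr.ν n) (us n) χ, ip (fr.ν 0) u χ, hw χ (fr.F_subset_C hχF), ?_, ?_⟩
  · filter_upwards [eventually_map.1 hM,
      (hs.tendsto_ip_sub_self hvs hv (fr.F_subset_C hχF)).sqrt.eventually_lt_const hvχ']
      with n hun hvn
    have hus2 := (hus n).1.2.1 n
    rw [Real.dist_eq, ← ip_sub_right hus2 (hvs n) (hχ n)]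
    calc _ ≤ _ := abs_ip_le hus2 ((hvs n).sub (hχ n))
      _ ≤ √M * (ε / K) := by gcongr; exact hvn.le
      _ ≤ ε := hKε _ (by linarith [Real.sqrt_nonneg (ip (fr.ν 0) u u)])
  · rw [Real.dist_eq, ← ip_sub_right hu hv (hχ 0)]
    calc _ ≤ _ := abs_ip_le hu (hv.sub (hχ 0))
      _ ≤ √(ip (fr.ν 0) u u) * (ε / K) := by gcongr; exact hvχ'.le
      _ ≤ ε := hKε _ (by linarith [Real.sqrt_nonneg M])

end Frame

theorem wconv_mul_general (fr : Frame E) (ψs : ℕ → E → ℝ) (hψs : ∀ n, ψs n ∈ fr.V)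
    (ψ : E → ℝ) (hψm : Measurable ψ) (hψ_inf : MemLp ψ ⊤ (fr.ν 0))
    (hsρ : ∀ ρ ∈ fr.C, fr.SConv (fun n x => ψs n x * ρ x) (fun x => ψ x * ρ x))
    (φs : ℕ → E → ℝ) (hφs : ∀ n, φs n ∈ fr.C)
    (φ : E → ℝ) (hφ2 : MemLp φ 2 (fr.ν 0)) (hw : fr.WConv φs φ) :
    fr.WConv (fun n x => φs n x * ψs n x) (fun x => φ x * ψ x) := by
  intro ρ hρ
  simp only [ip_mul_left]
  refine hw.tendsto_ip_of_sConv hφs hφ2 (fun n => ?_) (hψm.mul hρ.1.1)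
    ((hρ.1.2.1 0).mul' hψ_inf) (hsρ ρ hρ)
  simpa only [mul_comm] using ((hψs n).2.2.1 ρ hρ.1).2.1 n

/-- Proposition 2.3 (f): let `ψs n ∈ 𝓥`, `ψ ∈ L^∞(E, ν)`, and assume `ψs n · ρ`
`s`-converges to `ψ · ρ` for every `ρ ∈ 𝓒`.  If `φs n ∈ 𝓒` `w`-converges to
`φ ∈ L²(E, ν)`, then `φs n · ψs n` `w`-converges to `φ · ψ`. -/
theorem wconv_mul (fr : Frame E) (ψs : ℕ → E → ℝ) (hψs : ∀ n, ψs n ∈ fr.V)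
    (ψ : E → ℝ) (hψm : Measurable ψ) (hψ_inf : MemLp ψ ⊤ (fr.ν 0))
    (hsρ : ∀ ρ ∈ fr.C, fr.SConv (fun n x => ψs n x * ρ x) (fun x => ψ x * ρ x))
    (φs : ℕ → E → ℝ) (hφs : ∀ n, φs n ∈ fr.C)
    (φ : E → ℝ) (hφm : Measurable φ) (hφ2 : MemLp φ 2 (fr.ν 0)) (hw : fr.WConv φs φ) :
    fr.WConv (fun n x => φs n x * ψs n x) (fun x => φ x * ψ x) :=
  wconv_mul_general fr ψs hψs ψ hψm hψ_inf hsρ φs hφs φ hφ2 hw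

end Mosco
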